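/- The Payne conjecture fails in dimension one: for every L > 0, the second buckling eigenvalue of the interval [0,L] is strictly less than its third Dirichlet eigenvalue, i.e., Λ₂([0,L]) = Λ_{2,1}(L) < (3π/L)² = λ₃([0,L]). Equivalently, the smallest positive solution x₁ of tan x = x satisfies x₁ < 3π/2. -/
import Mathlib

open Real Set

/-- **The Payne conjecture fails in dimension one.** If `x₁` is the smallest
positive solution of `tan x = x`, then `x₁ < 3π/2`, and consequently for every
`L > 0` the second buckling eigenvalue `Λ₂([0,L]) = Λ_{2,1}(L) = (2x₁/L)²` of the
interval `[0,L]` is strictly less than its third Dirichlet eigenvalue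
`λ₃([0,L]) = (3π/L)²`. -/
theorem payne_conjecture_fails_in_dimension_one
    (x₁ : ℝ) (hpos : 0 < x₁) (hsol : Real.tan x₁ = x₁)
    (hmin : ∀ y : ℝ, 0 < y → Real.tan y = y → x₁ ≤ y) :
    x₁ < 3 * Real.pi / 2 ∧
      ∀ L : ℝ, 0 < L → (2 * x₁ / L) ^ 2 < (3 * Real.pi / L) ^ 2 := by
  have hπ3 : (3:ℝ) < π := Real.pi_gt_three
  have hπ4 : π < 3.15 := by linarith [Real.pi_lt_d2]
  set c : ℝ := 3 * π / 2 - 1/10 with hc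
  have hπc : π ≤ c := by rw [hc]; linarith
  have hclt : c < 3 * π / 2 := by rw [hc]; linarith
  have hc5 : c < 5 := by rw [hc]; linarith
  -- cos (1/10) ≥ 1/2
  have hcos : (1:ℝ)/2 ≤ Real.cos (1/10) := by
    have h := Real.cos_le_cos_of_nonneg_of_le_pi (by norm_num : (0:ℝ) ≤ 1/10)
      (by linarith : π/3 ≤ π) (by linarith : (1:ℝ)/10 ≤ π/3)
    rwa [Real.cos_pi_div_three] at h
  -- tan (1/10) ∈ (0, 1/5)
  have ht0 : 0 < Real.tan (1/10) :=
    Real.tan_pos_of_pos_of_lt_pi_div_two (by norm_num) (by linarith)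
  have htlt : Real.tan (1/10) < 1/5 := by
    rw [Real.tan_eq_sin_div_cos]
    have hs : Real.sin (1/10) < 1/10 := Real.sin_lt (by norm_num)
    rw [div_lt_iff₀ (by linarith : (0:ℝ) < Real.cos (1/10))]
    nlinarith
  -- tan c > c
  have htanc : c < Real.tan c := by
    have hceq : c = (π/2 - 1/10) + π := by rw [hc]; ring
    have : Real.tan c = (Real.tan (1/10))⁻¹ := by
      rw [hceq, Real.tan_add_pi, Real.tan_pi_div_two_sub]
    rw [this]
    have h5 : (5:ℝ) < (Real.tan (1/10))⁻¹ := by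
      rw [show (5:ℝ) = ((1:ℝ)/5)⁻¹ by norm_num]
      exact inv_strictAnti₀ ht0 htlt
    linarith
  -- continuity of tan x - x on [π, c]
  have hcont : ContinuousOn (fun x => Real.tan x - x) (Set.Icc π c) := by
    apply ContinuousOn.sub _ continuousOn_id
    apply Real.continuousOn_tan.mono
    intro x hx
    have h1 : π / 2 < x := by have := hx.1; linarith
    have h2 : x < π + π / 2 := lt_of_le_of_lt hx.2 (by rw [hc]; linarith)
    exact (Real.cos_neg_of_pi_div_two_lt_of_lt h1 h2).ne
  -- IVT
  have h0mem : (0:ℝ) ∈ Set.Icc (Real.tan π - π) (Real.tan c - c) := by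
    constructor
    · rw [Real.tan_pi]; linarith
    · linarith
  obtain ⟨y, hy, hgy⟩ := intermediate_value_Icc hπc hcont h0mem
  have hty : Real.tan y = y := by
    have : Real.tan y - y = 0 := hgy
    linarith
  have hypos : 0 < y := by have := hy.1; linarith
  have hx1 : x₁ < 3 * π / 2 := lt_of_le_of_lt (le_trans (hmin y hypos hty) hy.2) hclt
  refine ⟨hx1, fun L hL => ?_⟩
  have h2 : 2 * x₁ / L < 3 * π / L := by
    exact (div_lt_div_iff_of_pos_right hL).mpr (by linarith)
  exact pow_lt_pow_left₀ h2 (by positivity) (by norm_num)
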